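/- Let n ≥ 1 and let h : ℝ^n → ℝ be comonotonically additive and continuous. Then h = C_v, the signed Choquet integral with respect to the signed capacity v on [n] defined by v(S) = h(1_S), where 1_S is the characteristic vector of S ⊆ [n]. -/

import Mathlib

open Finset

/-- The Choquet-type sum computed with a given permutation `π`:
`∑ i (v({π(i),…,π(n)}) − v({π(i+1),…,π(n)})) x_{π(i)}`. -/
noncomputable def choquetSum {n : ℕ} (v : Finset (Fin n) → ℝ) (π : Equiv.Perm (Fin n))
    (x : Fin n → ℝ) : ℝ :=
  ∑ i : Fin n,
    (v ((Finset.univ.filter fun k => i ≤ k).image π) -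
      v ((Finset.univ.filter fun k => i < k).image π)) * x (π i)

/-- The signed (discrete) Choquet integral of `x` w.r.t. the set function `v`,
computed with a sorting permutation of `x`. -/
noncomputable def signedChoquet {n : ℕ} (v : Finset (Fin n) → ℝ) (x : Fin n → ℝ) : ℝ :=
  choquetSum v (Tuple.sort x) x

/-- Two vectors are comonotonic. -/
def Comonotone' {n : ℕ} (x x' : Fin n → ℝ) : Prop :=
  ∀ i j, 0 ≤ (x i - x j) * (x' i - x' j)

/-- Characteristic (indicator) vector of `S`. -/
def indVec {n : ℕ} (S : Finset (Fin n)) : Fin n → ℝ := fun i => if i ∈ S then 1 else 0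

/-- The unanimity game `v_S`. -/
def unanimity {n : ℕ} (S T : Finset (Fin n)) : ℝ := if S ⊆ T then 1 else 0

/-- The Möbius transform of a set function. -/
noncomputable def mobius {n : ℕ} (v : Finset (Fin n) → ℝ) (S : Finset (Fin n)) : ℝ :=
  ∑ T ∈ S.powerset, (-1 : ℝ) ^ (S.card - T.card) * v T

/-! Sort `x` along a permutation `π`, so that `x ∘ π` is monotone, and write `x` as the sum of
the layers `(x (π m) - x (π (m - 1))) • 1_{A m}` with `A m = π '' {m, …, n - 1}`. All layers are
monotone along `π`, hence pairwise comonotone together with their partial sums, so `h` splits over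
them. Continuity upgrades the rational homogeneity forced by additivity to `h (t • y) = t * h y`
for `t ≥ 0`; this evaluates every layer but the first, a constant vector, on which `h` is odd.
Summation by parts turns `∑ m, (x (π m) - x (π (m - 1))) * v (A m)` into the Choquet sum. -/
lemma comonotone_smul_left {n : ℕ} {a : ℝ} (ha : 0 ≤ a) (y : Fin n → ℝ) :
    Comonotone' (a • y) y := fun i j => by
  have : ((a • y) i - (a • y) j) * (y i - y j) = a * (y i - y j) ^ 2 := by
    simp only [Pi.smul_apply, smul_eq_mul]; ring
  rw [this]; positivity

lemma comonotone_of_monotone_comp {n : ℕ} (σ : Equiv.Perm (Fin n)) {y z : Fin n → ℝ}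
    (hy : Monotone (y ∘ σ)) (hz : Monotone (z ∘ σ)) : Comonotone' y z := by
  intro i j
  rcases le_total (σ.symm i) (σ.symm j) with hij | hij <;>
  · have hyij := hy hij
    have hzij := hz hij
    simp only [Function.comp_apply, Equiv.apply_symm_apply] at hyij hzij
    nlinarith

lemma indVec_empty {n : ℕ} : indVec (∅ : Finset (Fin n)) = 0 := by
  ext; simp [indVec]

def ComonotoneAdditive {n : ℕ} (h : (Fin n → ℝ) → ℝ) : Prop :=
  ∀ x x' : Fin n → ℝ, Comonotone' x x' → h (x + x') = h x + h x'

namespace ComonotoneAdditive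

variable {n : ℕ} {h : (Fin n → ℝ) → ℝ}

theorem map_zero (hh : ComonotoneAdditive h) : h 0 = 0 := by
  have := hh 0 0 fun i j => by simp
  rw [add_zero] at this
  linarith

theorem map_natCast_smul (hh : ComonotoneAdditive h) (k : ℕ) (y : Fin n → ℝ) :
    h ((k : ℝ) • y) = k * h y := by
  induction k with
  | zero => simp [hh.map_zero]
  | succ k ih =>
    rw [Nat.cast_succ, add_smul, one_smul, hh _ _ (comonotone_smul_left k.cast_nonneg y), ih]
    ring

theorem map_div_natCast_smul (hh : ComonotoneAdditive h) (a b : ℕ) (y : Fin n → ℝ) :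
    h (((a : ℝ) / b) • y) = a / b * h y := by
  rcases eq_or_ne b 0 with rfl | hb
  · simp [hh.map_zero]
  have hy : h y = b * h ((b : ℝ)⁻¹ • y) := by
    rw [← hh.map_natCast_smul, smul_smul, mul_inv_cancel₀ (Nat.cast_ne_zero.2 hb), one_smul]
  rw [div_eq_mul_inv, mul_smul, hh.map_natCast_smul, hy]
  field_simp

theorem map_nonneg_smul (hh : ComonotoneAdditive h) (hcont : Continuous h) {t : ℝ}
    (ht : 0 ≤ t) (y : Fin n → ℝ) : h (t • y) = t * h y := by
  -- passing to `|s|` gives two continuous functions on all of `ℝ`, equal on the dense `ℚ`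
  have key : (fun s : ℝ => h (|s| • y)) = fun s => |s| * h y := by
    refine Continuous.ext_on Rat.denseRange_cast (by fun_prop) (by fun_prop) ?_
    rintro _ ⟨q, rfl⟩
    have hq : |(q : ℝ)| = (q.num.natAbs : ℝ) / q.den := by
      rw [Rat.cast_def, abs_div, Nat.cast_natAbs, Int.cast_abs, Nat.abs_cast]
    simp only [hq]
    exact hh.map_div_natCast_smul _ _ y
  simpa [abs_of_nonneg ht] using congrFun key t

theorem map_smul_indVec_univ (hh : ComonotoneAdditive h) (hcont : Continuous h) (c : ℝ) :
    h (c • indVec univ) = c * h (indVec univ) := by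
  rcases le_total 0 c with hc | hc
  · exact hh.map_nonneg_smul hcont hc _
  · have hsum := hh (c • indVec univ) ((-c) • indVec univ) fun i j => by simp [indVec]
    rw [← add_smul, add_neg_cancel, zero_smul, hh.map_zero,
      hh.map_nonneg_smul hcont (neg_nonneg.2 hc)] at hsum
    linarith

theorem map_sum_of_monotone_comp (hh : ComonotoneAdditive h) (σ : Equiv.Perm (Fin n))
    {ι : Type*} (s : Finset ι) (g : ι → Fin n → ℝ) (hg : ∀ i ∈ s, Monotone (g i ∘ σ)) :
    h (∑ i ∈ s, g i) = ∑ i ∈ s, h (g i) := by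
  classical
  induction s using Finset.induction_on with
  | empty => simp [hh.map_zero]
  | insert a s ha ih =>
    have hs : Monotone ((∑ i ∈ s, g i) ∘ σ) :=
      Finset.sum_induction _ (fun y => Monotone (y ∘ σ)) (fun _ _ hy hz => hy.add hz)
        monotone_const fun i hi => hg i (mem_insert_of_mem hi)
    rw [sum_insert ha, sum_insert ha,
      hh _ _ (comonotone_of_monotone_comp σ (hg a (mem_insert_self a s)) hs),
      ih fun i hi => hg i (mem_insert_of_mem hi)]

end ComonotoneAdditive

theorem sum_range_sub_mul_eq {R : Type*} [CommRing R] (a s : ℕ → R) (n : ℕ) :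
    ∑ m ∈ range n, (s (m + 1) - s m) * a m =
      ∑ m ∈ range n, (a m - a (m + 1)) * s (m + 1) + a n * s n - a 0 * s 0 := by
  induction n with
  | zero => simp
  | succ n ih => rw [sum_range_succ, sum_range_succ, ih]; ring

section Layers

variable {n : ℕ} (π : Equiv.Perm (Fin n)) (x : Fin n → ℝ)

def tailSet (m : ℕ) : Finset (Fin n) :=
  (univ.filter fun k : Fin n => m ≤ (k : ℕ)).image π

theorem mem_tailSet {m : ℕ} {j : Fin n} : j ∈ tailSet π m ↔ m ≤ (π.symm j : ℕ) := by
  simp only [tailSet, mem_image, mem_filter, mem_univ, true_and]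
  exact ⟨fun ⟨k, hk, hkj⟩ => by simpa [← hkj] using hk, fun hm => ⟨_, hm, π.apply_symm_apply j⟩⟩

theorem tailSet_zero : tailSet π 0 = univ := by
  ext; simp [mem_tailSet]

theorem tailSet_self : tailSet π n = ∅ := by
  ext j; simp [mem_tailSet, (π.symm j).isLt]

theorem indVec_tailSet_apply (m : ℕ) (k : Fin n) :
    indVec (tailSet π m) (π k) = if m ≤ (k : ℕ) then 1 else 0 := by
  simp [indVec, mem_tailSet]

theorem monotone_indVec_tailSet_comp (m : ℕ) : Monotone (indVec (tailSet π m) ∘ π) := by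
  intro k l hkl
  simp only [Function.comp_apply, indVec_tailSet_apply]
  split_ifs with hk hl <;> norm_num
  exact hl (hk.trans hkl)

-- Shifted by one, `sortedValue π x (m + 1) = x (π m)`, so that the increment at `m = 0` is `x (π 0)`.
def sortedValue : ℕ → ℝ
  | 0 => 0
  | m + 1 => if hm : m < n then x (π ⟨m, hm⟩) else 0

def layer (m : ℕ) : Fin n → ℝ :=
  (sortedValue π x (m + 1) - sortedValue π x m) • indVec (tailSet π m)

theorem sum_layer : ∑ m ∈ range n, layer π x m = x := by
  ext j
  obtain ⟨k, rfl⟩ := π.surjective j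
  have hlayer : ∀ m ∈ range n, layer π x m (π k) = if m ≤ k then
      sortedValue π x (m + 1) - sortedValue π x m else 0 := by
    intro m _
    simp [layer, indVec_tailSet_apply]
  have hrange : (range n).filter (· ≤ (k : ℕ)) = range (k + 1) := by
    ext m; simp only [mem_filter, mem_range]; omega
  rw [Finset.sum_apply, sum_congr rfl hlayer, ← sum_filter, hrange, sum_range_sub]
  simp [sortedValue]

theorem choquetSum_eq_sum_range (v : Finset (Fin n) → ℝ) :
    choquetSum v π x =
      ∑ m ∈ range n, (v (tailSet π m) - v (tailSet π (m + 1))) * sortedValue π x (m + 1) := by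
  rw [choquetSum, ← Fin.sum_univ_eq_sum_range]
  refine sum_congr rfl fun i _ => ?_
  rw [show sortedValue π x (i + 1) = x (π i) by simp [sortedValue]]
  rfl

variable {π x}

theorem sortedValue_succ_sub_nonneg (hx : Monotone (x ∘ π)) {m : ℕ}
    (hm0 : m ≠ 0) (hm : m < n) : 0 ≤ sortedValue π x (m + 1) - sortedValue π x m := by
  obtain ⟨m, rfl⟩ := Nat.exists_eq_succ_of_ne_zero hm0
  simp only [sortedValue, dif_pos hm, dif_pos (Nat.lt_of_succ_lt hm)]
  exact sub_nonneg.2 (hx (Fin.mk_le_mk.2 m.le_succ))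

theorem monotone_layer_comp (hx : Monotone (x ∘ π)) {m : ℕ} (hm : m < n) :
    Monotone (layer π x m ∘ π) := by
  rcases eq_or_ne m 0 with rfl | hm0
  · intro k l _
    simp [layer, tailSet_zero, indVec]
  · exact (monotone_indVec_tailSet_comp π m).const_smul (sortedValue_succ_sub_nonneg hx hm0 hm)

theorem ComonotoneAdditive.map_layer {h : (Fin n → ℝ) → ℝ} (hh : ComonotoneAdditive h)
    (hcont : Continuous h) (hx : Monotone (x ∘ π)) {m : ℕ} (hm : m < n) :
    h (layer π x m) =
      (sortedValue π x (m + 1) - sortedValue π x m) * h (indVec (tailSet π m)) := by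
  rcases eq_or_ne m 0 with rfl | hm0
  · rw [layer, tailSet_zero]
    exact hh.map_smul_indVec_univ hcont _
  · exact hh.map_nonneg_smul hcont (sortedValue_succ_sub_nonneg hx hm0 hm) _

theorem ComonotoneAdditive.eq_choquetSum {h : (Fin n → ℝ) → ℝ} (hh : ComonotoneAdditive h)
    (hcont : Continuous h) (hx : Monotone (x ∘ π)) :
    h x = choquetSum (fun S => h (indVec S)) π x := by
  calc h x = h (∑ m ∈ range n, layer π x m) := by rw [sum_layer]
    _ = ∑ m ∈ range n, h (layer π x m) :=
      hh.map_sum_of_monotone_comp π _ _ fun m hm => monotone_layer_comp hx (mem_range.1 hm)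
    _ = ∑ m ∈ range n,
          (sortedValue π x (m + 1) - sortedValue π x m) * h (indVec (tailSet π m)) :=
      sum_congr rfl fun m hm => hh.map_layer hcont hx (mem_range.1 hm)
    _ = choquetSum (fun S => h (indVec S)) π x := by
      rw [sum_range_sub_mul_eq, tailSet_self, indVec_empty, hh.map_zero, choquetSum_eq_sum_range]
      simp [sortedValue]

end Layers

theorem eq_signedChoquet_of_comonotoneAdditive_continuous_general {n : ℕ}
    (h : (Fin n → ℝ) → ℝ)
    (hadd : ∀ x x' : Fin n → ℝ, Comonotone' x x' → h (x + x') = h x + h x')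
    (hcont : Continuous h) :
    ∀ x : Fin n → ℝ, h x = signedChoquet (fun S => h (indVec S)) x := fun x =>
  ComonotoneAdditive.eq_choquetSum hadd hcont (Tuple.monotone_sort x)

/-- A comonotonically additive continuous function is the signed
Choquet integral w.r.t. the signed capacity `S ↦ h(1_S)`. -/
theorem eq_signedChoquet_of_comonotoneAdditive_continuous {n : ℕ} (hn : 1 ≤ n)
    (h : (Fin n → ℝ) → ℝ)
    (hadd : ∀ x x' : Fin n → ℝ, Comonotone' x x' → h (x + x') = h x + h x')
    (hcont : Continuous h) :
    ∀ x : Fin n → ℝ, h x = signedChoquet (fun S => h (indVec S)) x :=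
  eq_signedChoquet_of_comonotoneAdditive_continuous_general h hadd hcont
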